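/- Let H > 0, let I = (a,b) be a bounded open interval, and let v : [a,b] → ℝ be continuous with v(x) > -H for all x ∈ I. Then every function θ that is continuously differentiable on the closure of O_I(v) satisfies ∫_I |θ(x, -H)|² (H + v(x)) dx ≤ ‖θ‖²_{L²(O_I(v))} + 2 M_v ‖θ‖_{L²(O_I(v))} ‖∂_z θ‖_{L²(O_I(v))}. -/

import Mathlib

open MeasureTheory Set

/-- The region between the bottom plate at height `-H` and the graph of `v` over
the interval `I = (a,b)`. -/
def OIv (H a b : ℝ) (v : ℝ → ℝ) : Set (ℝ × ℝ) :=
  {p : ℝ × ℝ | p.1 ∈ Set.Ioo a b ∧ -H < p.2 ∧ p.2 < v p.1}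

/-! For fixed `x`, the fundamental theorem of calculus for `z ↦ θ(x,z)²` on `[-H, v x]` gives
`θ(x,-H)² ≤ θ(x,z)² + 2 ∫ |θ ∂_z θ| dz` for every `z`; averaging over `z` multiplies the left side
by the height `H + v x ≤ M_v`. Integrating in `x` (Fubini on the region between the two graphs)
and applying Cauchy–Schwarz to `∫ |θ ∂_z θ|` gives the estimate. All integrability comes from the
boundedness of `θ` and `∂_z θ`, which follows from compactness of the closure of `O_I(v)`. -/

open Topology Filter

section Derivatives

variable {E F : Type*} [NormedAddCommGroup E] [NormedSpace ℝ E] [NormedAddCommGroup F]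
  [NormedSpace ℝ F]

/- `K` need not have unique derivatives, so there is no continuous derivative on all of `K`;
instead, the local derivatives supplied by `ContDiffWithinAt` are bounded near each point of `K`
and these local bounds are glued by compactness. -/
theorem IsCompact.exists_bound_fderiv_of_contDiffOn {f : E → F} {K : Set E}
    (hK : IsCompact K) (hf : ContDiffOn ℝ 1 f K) :
    ∃ C, ∀ p ∈ interior K, ‖fderiv ℝ f p‖ ≤ C := by
  suffices h : ∃ C, ∀ p ∈ K ∩ interior K, ‖fderiv ℝ f p‖ ≤ C by
    rwa [inter_eq_right.mpr interior_subset] at h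
  refine hK.induction_on (p := fun S => ∃ C, ∀ p ∈ S ∩ interior K, ‖fderiv ℝ f p‖ ≤ C)
    ⟨0, by simp⟩ (fun S T hST ⟨C, hC⟩ => ⟨C, fun p hp => hC p ⟨hST hp.1, hp.2⟩⟩)
    (fun S T ⟨C, hC⟩ ⟨C', hC'⟩ => ⟨max C C', ?_⟩) (fun q hq => ?_)
  · rintro p ⟨hp | hp, hpK⟩
    exacts [(hC p ⟨hp, hpK⟩).trans (le_max_left _ _), (hC' p ⟨hp, hpK⟩).trans (le_max_right _ _)]
  · have hfq : ContDiffWithinAt ℝ (0 + 1) f K q := by simpa using hf q hq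
    obtain ⟨u, hu, -, -, f', hf'u, hf'c⟩ :=
      (contDiffWithinAt_succ_iff_hasFDerivWithinAt' (by simp)).mp hfq
    rw [insert_eq_of_mem hq] at hu
    have hnear : ∀ᶠ p in 𝓝[K] q, f' p ∈ Metric.ball (f' q) 1 :=
      hf'c.continuousWithinAt.eventually (Metric.ball_mem_nhds _ one_pos)
    refine ⟨u ∩ {p | f' p ∈ Metric.ball (f' q) 1}, inter_mem hu hnear, ‖f' q‖ + 1, ?_⟩
    rintro p ⟨⟨hpu, hp1⟩, hpK⟩
    rw [((hf'u p hpu).hasFDerivAt (mem_interior_iff_mem_nhds.mp hpK)).fderiv]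
    linarith [norm_le_insert' (f' p) (f' q), mem_ball_iff_norm.mp hp1]

theorem DifferentiableAt.hasDerivAt_comp_prodMk_right {f : E × ℝ → F} {p : E × ℝ}
    (hf : DifferentiableAt ℝ f p) :
    HasDerivAt (fun z => f (p.1, z)) (fderiv ℝ f p (0, 1)) p.2 :=
  hf.hasFDerivAt.comp_hasDerivAt p.2 ((hasDerivAt_const _ _).prodMk (hasDerivAt_id _))

end Derivatives

theorem integral_abs_mul_le_sqrt_mul_sqrt {α : Type*} [MeasurableSpace α] {μ : Measure α}
    {f g : α → ℝ} (hf : MemLp f 2 μ) (hg : MemLp g 2 μ) :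
    ∫ x, |f x * g x| ∂μ ≤ √(∫ x, f x ^ 2 ∂μ) * √(∫ x, g x ^ 2 ∂μ) := by
  have hnorm : ∀ h : α → ℝ, ∫ x, ‖h x‖ ^ (2 : ℝ) ∂μ = ∫ x, h x ^ 2 ∂μ := fun h => by
    simp_rw [Real.rpow_two, Real.norm_eq_abs, sq_abs]
  have := integral_mul_norm_le_Lp_mul_Lq (p := 2) (q := 2) Real.HolderConjugate.two_two
    (by simpa using hf) (by simpa using hg)
  rw [hnorm, hnorm, ← Real.sqrt_eq_rpow, ← Real.sqrt_eq_rpow] at this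
  simpa only [Real.norm_eq_abs, ← abs_mul] using this

section RegionBetween

variable {α E : Type*} [NormedAddCommGroup E] [NormedSpace ℝ E] {f g : α → ℝ} {s : Set α}
  {F : α × ℝ → E}

theorem integral_indicator_regionBetween_mk (x : α) :
    ∫ z, (regionBetween f g s).indicator F (x, z) =
      s.indicator (fun x => ∫ z in Ioo (f x) (g x), F (x, z)) x := by
  by_cases hx : x ∈ s
  · rw [indicator_of_mem hx, ← integral_indicator measurableSet_Ioo]
    congr 1 with z
    simp [indicator, regionBetween, hx]
  · simp [indicator, regionBetween, hx]

theorem integrableOn_integral_regionBetween [MeasurableSpace α] {μ : Measure α}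
    (hs : MeasurableSet s)
    (hR : MeasurableSet (regionBetween f g s))
    (hF : IntegrableOn F (regionBetween f g s) (μ.prod volume)) :
    IntegrableOn (fun x => ∫ z in Ioo (f x) (g x), F (x, z)) s μ := by
  rw [← integrable_indicator_iff hs]
  simpa only [integral_indicator_regionBetween_mk] using
    ((integrable_indicator_iff hR).mpr hF).integral_prod_left

theorem setIntegral_regionBetween [MeasurableSpace α] {μ : Measure α} [SFinite μ]
    [CompleteSpace E] (hs : MeasurableSet s)
    (hR : MeasurableSet (regionBetween f g s))
    (hF : IntegrableOn F (regionBetween f g s) (μ.prod volume)) :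
    ∫ p in regionBetween f g s, F p ∂(μ.prod volume) =
      ∫ x in s, (∫ z in Ioo (f x) (g x), F (x, z)) ∂μ := by
  rw [← integral_indicator hR, integral_prod _ ((integrable_indicator_iff hR).mpr hF),
    ← integral_indicator hs]
  simp only [integral_indicator_regionBetween_mk]

end RegionBetween

theorem sq_le_sq_add_integral_abs_mul {f f' : ℝ → ℝ} {c d z : ℝ}
    (hf : ContinuousOn f (Icc c d)) (hderiv : ∀ z ∈ Ioo c d, HasDerivAt f (f' z) z)
    (hff' : IntegrableOn (fun z => f z * f' z) (Ioo c d)) (hz : z ∈ Ioo c d) :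
    f c ^ 2 ≤ f z ^ 2 + 2 * ∫ s in Ioo c d, |f s * f' s| := by
  have hFTC : ∫ s in c..z, 2 * (f s * f' s) = f z ^ 2 - f c ^ 2 :=
    intervalIntegral.integral_eq_sub_of_hasDerivAt_of_le hz.1.le
      ((hf.mono (Icc_subset_Icc_right hz.2.le)).pow 2)
      (fun s hs => ((hderiv s ⟨hs.1, hs.2.trans hz.2⟩).pow 2).congr_deriv (by ring))
      ((intervalIntegrable_iff_integrableOn_Ioc_of_le hz.1.le).mpr
        ((hff'.mono_set (Ioc_subset_Ioo_right hz.2)).const_mul 2))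
  have hbound : |∫ s in c..z, 2 * (f s * f' s)| ≤ 2 * ∫ s in Ioo c d, |f s * f' s| := by
    calc |∫ s in c..z, 2 * (f s * f' s)|
        ≤ ∫ s in c..z, |2 * (f s * f' s)| := intervalIntegral.abs_integral_le_integral_abs hz.1.le
      _ = 2 * ∫ s in Ioc c z, |f s * f' s| := by
        simp only [abs_mul, abs_two, intervalIntegral.integral_of_le hz.1.le, integral_const_mul]
      _ ≤ 2 * ∫ s in Ioo c d, |f s * f' s| := by
        gcongr 2 * ?_
        exact setIntegral_mono_set hff'.abs (ae_of_all _ fun s => abs_nonneg _)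
          (Ioc_subset_Ioo_right hz.2).eventuallyLE
  linarith [abs_le.mp hbound]

theorem sq_mul_le_integral_sq_add {f f' : ℝ → ℝ} {c d : ℝ} (hcd : c ≤ d)
    (hf : ContinuousOn f (Icc c d)) (hderiv : ∀ z ∈ Ioo c d, HasDerivAt f (f' z) z)
    (hf' : IntegrableOn f' (Ioo c d)) :
    f c ^ 2 * (d - c) ≤
      (∫ z in Ioo c d, f z ^ 2) + (d - c) * (2 * ∫ z in Ioo c d, |f z * f' z|) := by
  have hff' : IntegrableOn (fun z => f z * f' z) (Ioo c d) :=
    hf'.continuousOn_mul_of_subset hf isCompact_Icc measurableSet_Ioo Ioo_subset_Icc_self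
  have hf2 : IntegrableOn (fun z => f z ^ 2) (Ioo c d) :=
    ((hf.pow 2).integrableOn_compact isCompact_Icc).mono_set Ioo_subset_Icc_self
  set B := 2 * ∫ z in Ioo c d, |f z * f' z|
  have hB : IntegrableOn (fun _ => B) (Ioo c d) := integrableOn_const (by simp)
  have hvol : volume.real (Ioo c d) = d - c := by simp [measureReal_def, hcd]
  calc f c ^ 2 * (d - c) = ∫ _ in Ioo c d, f c ^ 2 := by
        rw [setIntegral_const, hvol, smul_eq_mul, mul_comm]
    _ ≤ ∫ z in Ioo c d, (f z ^ 2 + B) :=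
        setIntegral_mono_on (integrableOn_const (by simp)) (hf2.add hB) measurableSet_Ioo
          fun z hz => sq_le_sq_add_integral_abs_mul hf hderiv hff' hz
    _ = (∫ z in Ioo c d, f z ^ 2) + (d - c) * B := by
        rw [integral_add hf2 hB, setIntegral_const, hvol, smul_eq_mul]

section OIv

variable {H a b : ℝ} {v : ℝ → ℝ}

theorem OIv_eq_regionBetween : OIv H a b v = regionBetween (fun _ => -H) v (Ioo a b) := rfl

theorem isOpen_OIv (hv : ContinuousOn v (Ioo a b)) : IsOpen (OIv H a b v) := by
  have hgap : ContinuousOn (fun p : ℝ × ℝ => v p.1 - p.2) (Ioo a b ×ˢ Ioi (-H)) :=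
    (hv.comp continuousOn_fst fun _ hp => hp.1).sub continuousOn_snd
  convert hgap.isOpen_inter_preimage (isOpen_Ioo.prod isOpen_Ioi) (isOpen_Ioi (a := 0)) using 1
  ext p
  simp only [OIv, mem_ofPred_eq, mem_inter_iff, mem_prod, mem_Ioi, mem_preimage, sub_pos]
  tauto

theorem isBounded_OIv (hv : BddAbove (v '' Ioo a b)) : Bornology.IsBounded (OIv H a b v) := by
  obtain ⟨C, hC⟩ := hv
  refine ((Metric.isBounded_Icc a b).prod (Metric.isBounded_Icc (-H) C)).subset ?_
  rintro ⟨x, z⟩ ⟨hx, hz₁, hz₂⟩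
  exact ⟨Ioo_subset_Icc_self hx, hz₁.le, hz₂.le.trans (hC (mem_image_of_mem v hx))⟩

theorem mk_mem_closure_OIv {x z : ℝ} (hx : x ∈ Ioo a b) (hvx : -H < v x)
    (hz : z ∈ Icc (-H) (v x)) : (x, z) ∈ closure (OIv H a b v) := by
  have hsub : {x} ×ˢ Ioo (-H) (v x) ⊆ OIv H a b v := by
    rintro ⟨x', z'⟩ ⟨rfl, hz'⟩
    exact ⟨hx, hz'⟩
  have := closure_mono hsub
  rw [closure_prod_eq, closure_singleton, closure_Ioo hvx.ne] at this
  exact this ⟨rfl, hz⟩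

theorem isCompact_closure_OIv (hv : ContinuousOn v (Icc a b)) :
    IsCompact (closure (OIv H a b v)) :=
  (isBounded_OIv ((isCompact_Icc.bddAbove_image hv).mono
    (image_mono Ioo_subset_Icc_self))).isCompact_closure

theorem volume_OIv_lt_top (hv : ContinuousOn v (Icc a b)) : volume (OIv H a b v) < ⊤ :=
  (measure_mono subset_closure).trans_lt (isCompact_closure_OIv hv).measure_lt_top

end OIv

section Trace

variable {H a b : ℝ} {v : ℝ → ℝ} {θ : ℝ × ℝ → ℝ}

theorem differentiableAt_of_mem_OIv (hv : ContinuousOn v (Ioo a b))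
    (hθ : ContDiffOn ℝ 1 θ (closure (OIv H a b v))) {p : ℝ × ℝ} (hp : p ∈ OIv H a b v) :
    DifferentiableAt ℝ θ p :=
  (hθ.differentiableOn one_ne_zero p (subset_closure hp)).differentiableAt
    (mem_of_superset ((isOpen_OIv hv).mem_nhds hp) subset_closure)

theorem exists_bound_deriv_OIv (hv : ContinuousOn v (Icc a b))
    (hθ : ContDiffOn ℝ 1 θ (closure (OIv H a b v))) :
    ∃ C, ∀ p ∈ OIv H a b v, ‖deriv (fun z => θ (p.1, z)) p.2‖ ≤ C := by
  have hv' := hv.mono Ioo_subset_Icc_self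
  obtain ⟨C, hC⟩ := (isCompact_closure_OIv hv).exists_bound_fderiv_of_contDiffOn hθ
  refine ⟨C, fun p hp => ?_⟩
  rw [((differentiableAt_of_mem_OIv hv' hθ hp).hasDerivAt_comp_prodMk_right).deriv]
  simpa using (fderiv ℝ θ p).le_of_opNorm_le
    (hC p (interior_maximal subset_closure (isOpen_OIv hv') hp)) (0, 1)

theorem memLp_OIv (hv : ContinuousOn v (Icc a b))
    (hθ : ContDiffOn ℝ 1 θ (closure (OIv H a b v))) :
    MemLp θ 2 (volume.restrict (OIv H a b v)) := by
  have hO := (isOpen_OIv (H := H) (hv.mono Ioo_subset_Icc_self)).measurableSet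
  have := isFiniteMeasure_restrict.mpr (volume_OIv_lt_top (H := H) hv).ne
  obtain ⟨C, hC⟩ := (isCompact_closure_OIv hv).exists_bound_of_continuousOn hθ.continuousOn
  exact .of_bound ((hθ.continuousOn.mono subset_closure).aestronglyMeasurable hO) C
    (ae_restrict_of_forall_mem hO fun p hp => hC p (subset_closure hp))

theorem memLp_deriv_OIv (hv : ContinuousOn v (Icc a b))
    (hθ : ContDiffOn ℝ 1 θ (closure (OIv H a b v))) :
    MemLp (fun p => deriv (fun z => θ (p.1, z)) p.2) 2 (volume.restrict (OIv H a b v)) := by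
  have hv' := hv.mono Ioo_subset_Icc_self
  have hO := (isOpen_OIv (H := H) hv').measurableSet
  have := isFiniteMeasure_restrict.mpr (volume_OIv_lt_top (H := H) hv).ne
  obtain ⟨C, hC⟩ := exists_bound_deriv_OIv hv hθ
  have hmeas : AEStronglyMeasurable (fun p => deriv (fun z => θ (p.1, z)) p.2)
      (volume.restrict (OIv H a b v)) :=
    (measurable_fderiv_apply_const ℝ θ ((0 : ℝ), (1 : ℝ))).aestronglyMeasurable.congr
      (ae_restrict_of_forall_mem hO fun p hp =>
        ((differentiableAt_of_mem_OIv hv' hθ hp).hasDerivAt_comp_prodMk_right).deriv.symm)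
  exact .of_bound hmeas C (ae_restrict_of_forall_mem hO hC)

theorem sq_mul_le_integral_slice (hv : ContinuousOn v (Icc a b))
    (hθ : ContDiffOn ℝ 1 θ (closure (OIv H a b v))) {x : ℝ} (hx : x ∈ Ioo a b)
    (hvx : -H < v x) :
    θ (x, -H) ^ 2 * (H + v x) ≤ (∫ z in Ioo (-H) (v x), θ (x, z) ^ 2) +
      (H + v x) * (2 * ∫ z in Ioo (-H) (v x), |θ (x, z) * deriv (fun z => θ (x, z)) z|) := by
  obtain ⟨C, hC⟩ := exists_bound_deriv_OIv hv hθ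
  have hmem : ∀ z ∈ Ioo (-H) (v x), (x, z) ∈ OIv H a b v := fun z hz => ⟨hx, hz⟩
  have := sq_mul_le_integral_sq_add (f := fun z => θ (x, z)) (f' := deriv fun z => θ (x, z)) hvx.le
    (hθ.continuousOn.comp (Continuous.prodMk_right x).continuousOn
      fun z hz => mk_mem_closure_OIv hx hvx hz)
    (fun z hz => (differentiableAt_of_mem_OIv (hv.mono Ioo_subset_Icc_self) hθ
      (hmem z hz)).hasDerivAt_comp_prodMk_right.differentiableAt.hasDerivAt)
    (Measure.integrableOn_of_bounded (by simp) (measurable_deriv _).aestronglyMeasurable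
      (ae_restrict_of_forall_mem measurableSet_Ioo fun z hz => hC _ (hmem z hz)))
  rwa [sub_neg_eq_add, add_comm (v x)] at this

theorem integral_sq_mul_le_of_height_le (hv : ContinuousOn v (Icc a b))
    (hvH : ∀ x ∈ Ioo a b, -H < v x) (hθ : ContDiffOn ℝ 1 θ (closure (OIv H a b v))) {M : ℝ}
    (hM : ∀ x ∈ Ioo a b, H + v x ≤ M) :
    ∫ x in Ioo a b, θ (x, -H) ^ 2 * (H + v x) ≤ (∫ p in OIv H a b v, θ p ^ 2) +
      M * (2 * ∫ p in OIv H a b v, |θ p * deriv (fun z => θ (p.1, z)) p.2|) := by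
  have hθ2 := (memLp_OIv hv hθ).integrable_sq
  have hθD : IntegrableOn (fun p => |θ p * deriv (fun z => θ (p.1, z)) p.2|) (OIv H a b v) :=
    ((memLp_OIv hv hθ).integrable_mul (memLp_deriv_OIv hv hθ)).abs
  have hO := (isOpen_OIv (H := H) (hv.mono Ioo_subset_Icc_self)).measurableSet
  rw [OIv_eq_regionBetween] at hO hθ2 hθD
  have hsq := integrableOn_integral_regionBetween measurableSet_Ioo hO hθ2
  have hmul : IntegrableOn
      (fun x => M * (2 * ∫ z in Ioo (-H) (v x), |θ (x, z) * deriv (fun z => θ (x, z)) z|))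
      (Ioo a b) :=
    ((integrableOn_integral_regionBetween measurableSet_Ioo hO hθD).const_mul 2).const_mul M
  have hsq_eq : ∫ p in OIv H a b v, θ p ^ 2 =
      ∫ x in Ioo a b, ∫ z in Ioo (-H) (v x), θ (x, z) ^ 2 :=
    setIntegral_regionBetween measurableSet_Ioo hO hθ2
  have hmul_eq : ∫ p in OIv H a b v, |θ p * deriv (fun z => θ (p.1, z)) p.2| =
      ∫ x in Ioo a b, ∫ z in Ioo (-H) (v x), |θ (x, z) * deriv (fun z => θ (x, z)) z| :=
    setIntegral_regionBetween measurableSet_Ioo hO hθD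
  rw [hsq_eq, hmul_eq, ← integral_const_mul, ← integral_const_mul, ← integral_add hsq hmul]
  refine integral_mono_of_nonneg (ae_restrict_of_forall_mem measurableSet_Ioo fun x hx => ?_)
    (hsq.add hmul) (ae_restrict_of_forall_mem measurableSet_Ioo fun x hx => ?_)
  · exact mul_nonneg (sq_nonneg _) (by linarith [hvH x hx])
  · dsimp only
    grw [sq_mul_le_integral_slice hv hθ hx (hvH x hx), hM x hx]

end Trace

theorem stmt_2_general (H a b : ℝ) (v : ℝ → ℝ)
    (hv : ContinuousOn v (Icc a b)) (hvH : ∀ x ∈ Ioo a b, -H < v x)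
    (θ : ℝ × ℝ → ℝ)
    (hθ : ContDiffOn ℝ 1 θ (closure (OIv H a b v))) :
    ∫ x in Ioo a b, (θ (x, -H)) ^ 2 * (H + v x) ≤
      (∫ p in OIv H a b v, (θ p) ^ 2)
        + 2 * sSup ((fun x => H + v x) '' Ioo a b)
          * Real.sqrt (∫ p in OIv H a b v, (θ p) ^ 2)
          * Real.sqrt (∫ p in OIv H a b v, (deriv (fun z => θ (p.1, z)) p.2) ^ 2) := by
  set M := sSup ((fun x => H + v x) '' Ioo a b)
  have hM : ∀ x ∈ Ioo a b, H + v x ≤ M := fun x hx =>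
    le_csSup ((isCompact_Icc.bddAbove_image (continuousOn_const.add hv)).mono
      (image_mono Ioo_subset_Icc_self)) (mem_image_of_mem _ hx)
  have hM0 : 0 ≤ M := Real.sSup_nonneg (by rintro _ ⟨x, hx, rfl⟩; linarith [hvH x hx])
  have hCS := integral_abs_mul_le_sqrt_mul_sqrt (memLp_OIv hv hθ) (memLp_deriv_OIv hv hθ)
  calc ∫ x in Ioo a b, θ (x, -H) ^ 2 * (H + v x)
      ≤ (∫ p in OIv H a b v, θ p ^ 2) +
          M * (2 * ∫ p in OIv H a b v, |θ p * deriv (fun z => θ (p.1, z)) p.2|) :=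
        integral_sq_mul_le_of_height_le hv hvH hθ hM
    _ ≤ (∫ p in OIv H a b v, θ p ^ 2) + M * (2 * (√(∫ p in OIv H a b v, θ p ^ 2) *
          √(∫ p in OIv H a b v, deriv (fun z => θ (p.1, z)) p.2 ^ 2))) := by
        gcongr
    _ = _ := by ring

/-- Trace estimate on the bottom boundary for functions that are `C¹` on the closure
of `O_I(v)`:
`∫_I |θ(x,-H)|² (H+v(x)) dx ≤ ‖θ‖² + 2 M_v ‖θ‖ ‖∂_z θ‖`, with `M_v = sup_I (H+v)`. -/
theorem stmt_2 (H a b : ℝ) (hH : 0 < H) (hab : a < b) (v : ℝ → ℝ)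
    (hv : ContinuousOn v (Icc a b)) (hvH : ∀ x ∈ Ioo a b, -H < v x)
    (θ : ℝ × ℝ → ℝ)
    (hθ : ContDiffOn ℝ 1 θ (closure (OIv H a b v))) :
    ∫ x in Ioo a b, (θ (x, -H)) ^ 2 * (H + v x) ≤
      (∫ p in OIv H a b v, (θ p) ^ 2)
        + 2 * sSup ((fun x => H + v x) '' Ioo a b)
          * Real.sqrt (∫ p in OIv H a b v, (θ p) ^ 2)
          * Real.sqrt (∫ p in OIv H a b v, (deriv (fun z => θ (p.1, z)) p.2) ^ 2) :=
  stmt_2_general H a b v hv hvH θ hθ
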